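/- In the polynomial algebra k[Z_a : a ∈ L × ℕ^(d+1)] with partial derivatives D_a := ∂/∂Z_a, define for each k ∈ ℕ^(d+1) the derivation ∂^k := Σ_a Z_{a+k} D_a (where a + k shifts the ℕ^(d+1)-component of the index a). Then for every multi-index m ∈ ℕ^(d+1), every index a, and every polynomial G, one has Σ_{ℓ ∈ ℕ^(d+1), ℓ ≤ m} binom(m, ℓ) ∂^(m−ℓ) D_{a−ℓ} G = D_a ∂^m G, where D_{a−ℓ} is interpreted as 0 when the ℕ^(d+1)-part of a−ℓ has a negative component. -/

import Mathlib

open MvPolynomial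
open scoped Classical

/-- multi-indices in `ℕ^(d+1)` (here `n = d+1`) -/
abbrev MIdx (n : ℕ) := Fin n → ℕ

/-- componentwise binomial coefficient, zero unless `m ≤ k` -/
def binomM {n : ℕ} (k m : MIdx n) : ℕ := ∏ i, (k i).choose (m i)

variable {n : ℕ} {L : Type} {K : Type} [Field K]

/-- the single-direction derivation `∂^{e_i} = Σ_a Z_{a+e_i} D_a` on `K[Z_a]`,
`a ∈ L × ℕ^n`; the (mathematically infinite) sum is realised as the finite sum
over the variables actually occurring. -/
noncomputable def del1 (i : Fin n) (G : MvPolynomial (L × MIdx n) K) :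
    MvPolynomial (L × MIdx n) K :=
  ∑ a ∈ G.vars, X (a.1, a.2 + Pi.single i 1) * pderiv a G

/-- the iterated derivation `∂^m`, composing the `∂^{e_i}` according to the
multi-index `m` -/
noncomputable def delM (m : MIdx n) (G : MvPolynomial (L × MIdx n) K) :
    MvPolynomial (L × MIdx n) K :=
  ((List.finRange n).foldr (fun i f => (del1 i)^[m i] ∘ f) id) G

/-- `D_{a-ℓ}`, interpreted as `0` when the multi-index part of `a - ℓ` would have a
negative component -/
noncomputable def pderivSub (a : L × MIdx n) (ℓ : MIdx n)
    (G : MvPolynomial (L × MIdx n) K) : MvPolynomial (L × MIdx n) K :=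
  if ℓ ≤ a.2 then pderiv (a.1, a.2 - ℓ) G else 0

/-! `∂^{e_i}` and `D_{a-ℓ}` are derivations, and their commutator `⁅D_{a-ℓ}, ∂^{e_i}⁆` is the
derivation `D_{a-ℓ-e_i}` (compare both on the variables). In any ring, right multiplication
by `T` is the sum of the commuting operators `y ↦ T * y` and `y ↦ ⁅y, T⁆`, so the binomial
theorem gives `D * T ^ k = ∑ j, (k choose j) • T ^ (k - j) * D_j` with `D_j` the `j`-fold
bracket of `D` with `T`. For `T = ∂^{e_i}` this is the identity in one direction; the
multi-index identity follows by induction over the directions, splitting the sum over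
`ℓ ≤ m` according to the `i`-th coordinate of `ℓ`. -/

theorem MvPolynomial.derivation_eq_sum_vars_mul_pderiv {σ R : Type*} [CommSemiring R]
    (D : Derivation R (MvPolynomial σ R) (MvPolynomial σ R)) (f : MvPolynomial σ R) :
    D f = ∑ i ∈ f.vars, D (X i) * pderiv i f := by
  let D' : Derivation R (MvPolynomial σ R) (MvPolynomial σ R) :=
    ∑ i ∈ f.vars, D (X i) • pderiv i
  have hD' (g : MvPolynomial σ R) : D' g = ∑ i ∈ f.vars, D (X i) * pderiv i g := by
    rw [← Derivation.coeFnAddMonoidHom_apply, map_sum, Finset.sum_apply]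
    rfl
  rw [← hD']
  refine derivation_eq_of_forall_mem_vars fun j hj => ?_
  simp [hD', pderiv_X, Pi.single_apply, hj]

theorem mul_pow_eq_sum_pow_mul_iterate_lie {A : Type*} [Ring A] (x T : A) (k : ℕ) :
    x * T ^ k = ∑ j ∈ Finset.range (k + 1),
      k.choose j • (T ^ (k - j) * (fun y => ⁅y, T⁆)^[j] x) := by
  set L := LinearMap.mulLeft ℤ T
  set δ : Module.End ℤ A := LinearMap.mulRight ℤ T - L
  have hδ (j : ℕ) : (δ ^ j) x = (fun y => ⁅y, T⁆)^[j] x := by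
    rw [Module.End.pow_apply]
    rfl
  have hcomm : Commute δ L := (LinearMap.commute_mulLeft_right T T).symm.sub_left (Commute.refl _)
  calc x * T ^ k = (LinearMap.mulRight ℤ T ^ k) x := by rw [LinearMap.pow_mulRight]; rfl
    _ = ((δ + L) ^ k) x := by rw [sub_add_cancel]
    _ = _ := by
      rw [hcomm.add_pow, LinearMap.coe_sum, Finset.sum_apply]
      refine Finset.sum_congr rfl fun j _ => ?_
      rw [(hcomm.pow_pow j (k - j)).eq, Module.End.mul_apply, Module.End.mul_apply,
        Module.End.natCast_apply, map_nsmul, map_nsmul, hδ, LinearMap.pow_mulLeft]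
      rfl

theorem Finset.sum_Icc_eq_sum_range_sum_Icc_update {ι M : Type*} [Fintype ι] [DecidableEq ι]
    [AddCommMonoid M] (m : ι → ℕ) (i : ι) (f : (ι → ℕ) → M) :
    ∑ ℓ ∈ Icc 0 m, f ℓ =
      ∑ j ∈ range (m i + 1), ∑ ℓ ∈ Icc 0 (Function.update m i 0), f (ℓ + Pi.single i j) := by
  rw [← Finset.sum_product']
  symm
  refine Finset.sum_nbij' (fun p => p.2 + Pi.single i p.1)
    (fun ℓ => (ℓ i, Function.update ℓ i 0)) ?_ ?_ ?_ ?_ (fun _ _ => rfl)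
  · rintro ⟨j, ℓ⟩ hp
    simp only [mem_product, mem_range, mem_Icc] at hp ⊢
    refine ⟨zero_le, fun k => ?_⟩
    have := hp.2.2 k
    rcases eq_or_ne k i with rfl | hk <;> simp_all
  · intro ℓ hℓ
    simp only [mem_product, mem_range, mem_Icc] at hℓ ⊢
    refine ⟨Nat.lt_succ_of_le (hℓ.2 i), zero_le, fun k => ?_⟩
    rcases eq_or_ne k i with rfl | hk <;> simp [*, hℓ.2 k]
  · rintro ⟨j, ℓ⟩ hp
    simp only [mem_product, mem_range, mem_Icc] at hp
    have hℓi : ℓ i = 0 := by simpa using hp.2.2 i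
    ext k
    · simp [hℓi]
    · rcases eq_or_ne k i with rfl | hk <;> simp [*]
  · intro ℓ _
    ext k
    rcases eq_or_ne k i with rfl | hk <;> simp [*]

theorem binomM_add_single (m ℓ : MIdx n) (i : Fin n) (hℓ : ℓ i = 0) (j : ℕ) :
    binomM m (ℓ + Pi.single i j) = (m i).choose j * binomM (Function.update m i 0) ℓ := by
  rw [binomM, binomM, Fintype.prod_eq_mul_prod_compl i, Fintype.prod_eq_mul_prod_compl i]
  simp only [Pi.add_apply, Pi.single_eq_same, hℓ, zero_add, Function.update_self,
    Nat.choose_zero_right, one_mul]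
  congr 1
  refine Finset.prod_congr rfl fun k hk => ?_
  have hki : k ≠ i := by simpa using hk
  simp [hki]

local notation "𝒫" => MvPolynomial (L × MIdx n) K

noncomputable def shiftDeriv (i : Fin n) : Derivation K 𝒫 𝒫 :=
  mkDerivation K fun b => X (b.1, b.2 + Pi.single i 1)

/-- `D_{a-ℓ}`, written without truncated subtraction (see `pderivSub_eq_lowerDeriv`). -/
noncomputable def lowerDeriv (a : L × MIdx n) (ℓ : MIdx n) : Derivation K 𝒫 𝒫 :=
  mkDerivation K fun b => if (b.1, b.2 + ℓ) = a then 1 else 0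

theorem del1_eq_shiftDeriv (i : Fin n) : del1 (L := L) (K := K) i = shiftDeriv i := by
  funext G
  rw [del1, derivation_eq_sum_vars_mul_pderiv (shiftDeriv i)]
  simp only [shiftDeriv, mkDerivation_X]

theorem pderivSub_eq_lowerDeriv (a : L × MIdx n) (ℓ : MIdx n) :
    pderivSub (K := K) a ℓ = lowerDeriv a ℓ := by
  funext G
  unfold pderivSub
  split_ifs with hℓ
  · congr 1
    ext b
    rw [pderiv_X, lowerDeriv, mkDerivation_X, Pi.single_apply]
    congr 1
    simp only [Prod.ext_iff, eq_tsub_iff_add_eq_of_le hℓ]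
  · refine (derivation_eq_zero_of_forall_mem_vars fun b _ => ?_).symm
    rw [lowerDeriv, mkDerivation_X, if_neg]
    rintro rfl
    exact hℓ le_add_self

theorem pderiv_eq_lowerDeriv_zero (a : L × MIdx n) :
    ⇑(pderiv a : Derivation K 𝒫 𝒫) = lowerDeriv a 0 := by
  rw [← pderivSub_eq_lowerDeriv]
  funext G
  simp [pderivSub]

theorem lowerDeriv_lie_shiftDeriv (a : L × MIdx n) (ℓ : MIdx n) (i : Fin n) :
    ⁅lowerDeriv (K := K) a ℓ, shiftDeriv i⁆ = lowerDeriv (K := K) a (ℓ + Pi.single i 1) := by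
  refine derivation_ext fun b => ?_
  have hconst (c : Prop) [Decidable c] :
      shiftDeriv (K := K) (L := L) i (if c then 1 else 0) = 0 := by
    split_ifs <;> simp
  rw [Derivation.commutator_apply]
  simp only [lowerDeriv, mkDerivation_X]
  rw [hconst, sub_zero]
  simp only [shiftDeriv, mkDerivation_X, add_right_comm b.2, add_assoc]

noncomputable def shiftPow (s : List (Fin n)) (m : MIdx n) : Module.End K 𝒫 :=
  (s.map fun i => (shiftDeriv i).toLinearMap ^ m i).prod

theorem shiftPow_nil (m : MIdx n) : shiftPow (L := L) (K := K) [] m = 1 := rfl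

theorem shiftPow_cons (i : Fin n) (s : List (Fin n)) (m : MIdx n) :
    shiftPow (L := L) (K := K) (i :: s) m = (shiftDeriv i).toLinearMap ^ m i * shiftPow s m :=
  rfl

theorem foldr_del1_iterate_eq_shiftPow (s : List (Fin n)) (m : MIdx n) :
    s.foldr (fun i f => (del1 i)^[m i] ∘ f) id = ⇑(shiftPow (L := L) (K := K) s m) := by
  induction s with
  | nil => rfl
  | cons i s ih =>
    rw [List.foldr_cons, ih, del1_eq_shiftDeriv, shiftPow_cons, Module.End.coe_mul,
      Module.End.coe_pow]
    rfl

theorem delM_eq_shiftPow (m : MIdx n) :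
    delM (L := L) (K := K) m = shiftPow (List.finRange n) m :=
  foldr_del1_iterate_eq_shiftPow _ m

theorem shiftPow_congr {s : List (Fin n)} {m m' : MIdx n} (h : ∀ i ∈ s, m i = m' i) :
    shiftPow (L := L) (K := K) s m = shiftPow s m' := by
  rw [shiftPow, shiftPow, List.map_congr_left fun i hi => by rw [h i hi]]

theorem iterate_lie_shiftDeriv_lowerDeriv (a : L × MIdx n) (ℓ : MIdx n) (i : Fin n) (j : ℕ) :
    (fun y => ⁅y, (shiftDeriv i).toLinearMap⁆)^[j] (lowerDeriv a ℓ).toLinearMap =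
      (lowerDeriv (K := K) a (ℓ + Pi.single i j)).toLinearMap := by
  induction j with
  | zero => simp
  | succ j ih =>
    rw [Function.iterate_succ_apply', ih, ← Derivation.commutator_coe_linear_map,
      lowerDeriv_lie_shiftDeriv, add_assoc, ← Pi.single_add]

theorem lowerDeriv_mul_shiftDeriv_pow (a : L × MIdx n) (ℓ : MIdx n) (i : Fin n) (k : ℕ) :
    (lowerDeriv (K := K) a ℓ).toLinearMap * (shiftDeriv i).toLinearMap ^ k =
      ∑ j ∈ Finset.range (k + 1), k.choose j • ((shiftDeriv i).toLinearMap ^ (k - j) *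
        (lowerDeriv a (ℓ + Pi.single i j)).toLinearMap) := by
  simp only [mul_pow_eq_sum_pow_mul_iterate_lie, iterate_lie_shiftDeriv_lowerDeriv]

theorem lowerDeriv_mul_shiftPow {s : List (Fin n)} (hs : s.Nodup) {m : MIdx n}
    (hm : ∀ i ∉ s, m i = 0) (a : L × MIdx n) (ℓ : MIdx n) :
    (lowerDeriv (K := K) a ℓ).toLinearMap * shiftPow s m =
      ∑ ℓ' ∈ Finset.Icc 0 m,
        binomM m ℓ' • (shiftPow s (m - ℓ') * (lowerDeriv a (ℓ + ℓ')).toLinearMap) := by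
  induction s generalizing m ℓ with
  | nil =>
    obtain rfl : m = 0 := funext fun i => hm i List.not_mem_nil
    simp [shiftPow_nil, binomM]
  | cons i t ih =>
    obtain ⟨hit, ht⟩ := List.nodup_cons.mp hs
    set m' := Function.update m i 0 with hm'_def
    have hm' : ∀ k ∉ t, m' k = 0 := by
      intro k hk
      rcases eq_or_ne k i with rfl | hki
      · exact Function.update_self ..
      · rw [hm'_def, Function.update_of_ne hki]
        exact hm k (by simp [hki, hk])
    have hm'_eq : ∀ k ∈ t, m' k = m k := fun k hk =>
      Function.update_of_ne (ne_of_mem_of_not_mem hk hit) ..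
    calc (lowerDeriv a ℓ).toLinearMap * shiftPow (i :: t) m
        = (lowerDeriv a ℓ).toLinearMap * (shiftDeriv i).toLinearMap ^ m i * shiftPow t m' := by
          rw [shiftPow_cons, mul_assoc, shiftPow_congr fun k hk => (hm'_eq k hk).symm]
      _ = ∑ j ∈ Finset.range (m i + 1), (m i).choose j • ((shiftDeriv i).toLinearMap ^ (m i - j) *
            ((lowerDeriv a (ℓ + Pi.single i j)).toLinearMap * shiftPow t m')) := by
          rw [lowerDeriv_mul_shiftDeriv_pow, Finset.sum_mul]
          simp only [smul_mul_assoc, mul_assoc]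
      _ = ∑ j ∈ Finset.range (m i + 1), ∑ ℓ' ∈ Finset.Icc 0 m',
            binomM m (ℓ' + Pi.single i j) • (shiftPow (i :: t) (m - (ℓ' + Pi.single i j)) *
              (lowerDeriv a (ℓ + (ℓ' + Pi.single i j))).toLinearMap) := by
          refine Finset.sum_congr rfl fun j _ => ?_
          rw [ih ht hm', Finset.mul_sum, Finset.smul_sum]
          refine Finset.sum_congr rfl fun ℓ' hℓ' => ?_
          have hℓ'i : ℓ' i = 0 := by
            simpa [m'] using (Finset.mem_Icc.mp hℓ').2 i
          have hexp : (m - (ℓ' + Pi.single i j) : MIdx n) i = m i - j := by simp [hℓ'i]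
          have hrest : shiftPow (L := L) (K := K) t (m - (ℓ' + Pi.single i j)) =
              shiftPow t (m' - ℓ') := shiftPow_congr fun k hk => by
            have hki := ne_of_mem_of_not_mem hk hit
            simp [m', hki]
          rw [binomM_add_single m ℓ' i hℓ'i, shiftPow_cons, hexp, hrest, mul_smul, mul_smul_comm,
            add_right_comm, ← add_assoc, mul_assoc]
      _ = _ := by rw [Finset.sum_Icc_eq_sum_range_sum_Icc_update m i]

/-- the commutation identity
`Σ_{ℓ ≤ m} binom(m,ℓ) ∂^(m−ℓ) D_{a−ℓ} G = D_a ∂^m G`. -/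
theorem stmt_3 (m : MIdx n) (a : L × MIdx n) (G : MvPolynomial (L × MIdx n) K) :
    ∑ ℓ ∈ Finset.Icc 0 m, (binomM m ℓ : K) • delM (m - ℓ) (pderivSub a ℓ G)
      = pderiv a (delM m G) := by
  have key := lowerDeriv_mul_shiftPow (K := K) (List.nodup_finRange n) (m := m)
    (fun i hi => absurd (List.mem_finRange i) hi) a 0
  simp only [delM_eq_shiftPow, pderivSub_eq_lowerDeriv, pderiv_eq_lowerDeriv_zero]
  rw [← Derivation.coeFn_coe, ← Module.End.mul_apply, key, LinearMap.coe_sum, Finset.sum_apply]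
  simp only [zero_add, Nat.cast_smul_eq_nsmul, LinearMap.smul_apply, Module.End.mul_apply,
    Derivation.coeFn_coe]
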